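/- arXiv:1306.3690 — 2 statements merged into one kernel-verified Lean document; each statement's English description precedes it below -/
import Mathlib

section
/- Let F = { y ∈ ℝ^p : ‖y‖₂ ≤ 1 and ‖y‖₁ ≤ √k } and F̂ = { y ∈ ℝ^p : ‖y‖₂ ≤ 1 and ‖y‖₀ ≤ 40·√(pk) }, where ‖y‖₀ is the number of nonzero entries of y. Then F is contained in the 1/40-neighborhood of F̂; that is, for every y ∈ F there exists y' ∈ F̂ with ‖y − y'‖₂ ≤ 1/40. -/
open MeasureTheory ProbabilityTheory Filter
open scoped ENNReal NNReal

noncomputable section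

/-- Sample space of the single-spike model: the `u_i`'s and the noise vectors `ξ_i`. -/
abbrev SpikeOmega (n p : ℕ) : Type := (Fin n → ℝ) × (Fin n → Fin p → ℝ)

/-- The probability measure of the single-spike model: all `u_i` and all entries of the `ξ_i`
are i.i.d. standard Gaussians. -/
noncomputable def spikeMeasure (n p : ℕ) : Measure (SpikeOmega n p) :=
  (Measure.pi fun _ : Fin n => gaussianReal 0 1).prod
    (Measure.pi fun _ : Fin n => Measure.pi fun _ : Fin p => gaussianReal 0 1)

instance (n p : ℕ) : IsProbabilityMeasure (spikeMeasure n p) := by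
  unfold spikeMeasure; infer_instance

/-- `z` is a `k`-sparse spike: a unit vector with exactly `k` nonzero entries,
each equal to `±1/√k`. -/
def IsSpike (p k : ℕ) (z : Fin p → ℝ) : Prop :=
  (∀ j, z j = 0 ∨ z j = 1 / Real.sqrt k ∨ z j = -(1 / Real.sqrt k)) ∧
    {j | z j ≠ 0}.ncard = k

/-- The `i`-th sample `x_i = √β · u_i · z + ξ_i` of the single-spike model. -/
noncomputable def sample {n p : ℕ} (β : ℝ) (z : Fin p → ℝ) (ω : SpikeOmega n p)
    (i : Fin n) (j : Fin p) : ℝ :=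
  Real.sqrt β * ω.1 i * z j + ω.2 i j

/-- Sample covariance matrix `Σ̂ = (1/n) ∑ x_i x_iᵀ` of the single-spike model. -/
noncomputable def sampleCov (n p : ℕ) (β : ℝ) (z : Fin p → ℝ) (ω : SpikeOmega n p) :
    Matrix (Fin p) (Fin p) ℝ :=
  Matrix.of fun a b => (1 / (n : ℝ)) * ∑ i : Fin n, sample β z ω i a * sample β z ω i b

/-- Frobenius inner product `⟨A, B⟩ = ∑_{i,j} A_{ij} B_{ij}`. -/
noncomputable def frobInner {p : ℕ} (A B : Matrix (Fin p) (Fin p) ℝ) : ℝ :=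
  ∑ i, ∑ j, A i j * B i j

/-- Absolute-sum norm `‖X‖_S = ∑_{i,j} |X_{ij}|`. -/
noncomputable def absSum {p : ℕ} (X : Matrix (Fin p) (Fin p) ℝ) : ℝ :=
  ∑ i, ∑ j, |X i j|

/-- Feasibility for the SDP: `X` is symmetric PSD, has trace one, and `‖X‖_S ≤ k`. -/
def SdpFeasible {p : ℕ} (k : ℕ) (X : Matrix (Fin p) (Fin p) ℝ) : Prop :=
  X.PosSemidef ∧ X.trace = 1 ∧ absSum X ≤ (k : ℝ)

/-- `X` is an optimal solution of the SDP `max ⟨S, X⟩` over the feasible set. -/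
def SdpOptimal {p : ℕ} (k : ℕ) (S X : Matrix (Fin p) (Fin p) ℝ) : Prop :=
  SdpFeasible k X ∧ ∀ Y, SdpFeasible k Y → frobInner S Y ≤ frobInner S X

/-- The largest eigenvalue of a matrix (the supremum of its eigenvalues). -/
noncomputable def lambdaMax {p : ℕ} (A : Matrix (Fin p) (Fin p) ℝ) : ℝ :=
  sSup {μ : ℝ | ∃ v : Fin p → ℝ, v ≠ 0 ∧ A.mulVec v = μ • v}

/-- The spectral norm `‖A‖ = √(λ_max (A Aᵀ))`. -/
noncomputable def specNorm {p : ℕ} (A : Matrix (Fin p) (Fin p) ℝ) : ℝ :=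
  Real.sqrt (lambdaMax (A * A.transpose))

end

/-- Lemma 7.1: every `y ∈ ℝᵖ` with `‖y‖₂ ≤ 1` and `‖y‖₁ ≤ √k` is within
Euclidean distance `1/40` of some `y'` with `‖y'‖₂ ≤ 1` and `‖y'‖₀ ≤ 40·√(pk)`. -/
theorem stmt_11 (p k : ℕ) (y : Fin p → ℝ)
    (h2 : Real.sqrt (∑ i, y i ^ 2) ≤ 1)
    (h1 : ∑ i, |y i| ≤ Real.sqrt k) :
    ∃ y' : Fin p → ℝ,
      (Real.sqrt (∑ i, y' i ^ 2) ≤ 1 ∧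
        ({i | y' i ≠ 0}.ncard : ℝ) ≤ 40 * Real.sqrt ((p : ℝ) * k)) ∧
      Real.sqrt (∑ i, (y i - y' i) ^ 2) ≤ 1 / 40 := by
  by_cases hcase : p ≤ 1600 * k
  · -- take y' = y
    refine ⟨y, ⟨h2, ?_⟩, by simp⟩
    have hcard : ({i | y i ≠ 0}.ncard : ℝ) ≤ (p : ℝ) := by
      have := Set.ncard_le_ncard (Set.subset_univ {i | y i ≠ 0}) Set.finite_univ
      have h2' : (Set.univ : Set (Fin p)).ncard = p := by
        simp [Set.ncard_univ]
      exact_mod_cast h2' ▸ this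
    refine hcard.trans ?_
    have h40 : (40 : ℝ) * Real.sqrt ((p : ℝ) * k) = Real.sqrt (1600 * ((p : ℝ) * k)) := by
      rw [Real.sqrt_mul (by norm_num : (1600:ℝ) ≥ 0) ((p:ℝ)*k)]
      rw [show (1600:ℝ) = 40^2 by norm_num, Real.sqrt_sq (by norm_num : (0:ℝ) ≤ 40)]
    rw [h40]
    have hple : (p : ℝ) ≤ 1600 * k := by exact_mod_cast hcase
    have hsq2 : (p:ℝ)^2 ≤ 1600 * ((p:ℝ) * k) := by
      nlinarith [Nat.cast_nonneg (α := ℝ) p, Nat.cast_nonneg (α := ℝ) k]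
    calc (p:ℝ) = Real.sqrt ((p:ℝ)^2) := (Real.sqrt_sq (Nat.cast_nonneg p)).symm
      _ ≤ Real.sqrt (1600 * ((p:ℝ)*k)) := Real.sqrt_le_sqrt hsq2
  · push_neg at hcase
    have hp0 : 0 < p := by omega
    have hpR : (0:ℝ) < p := by exact_mod_cast hp0
    have hsp : (0:ℝ) < Real.sqrt p := Real.sqrt_pos.mpr hpR
    set t : ℝ := 1 / (40 * Real.sqrt p) with ht
    have htpos : 0 < t := by positivity
    set y' : Fin p → ℝ := fun i => if t ≤ |y i| then y i else 0 with hy'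
    have hsq : ∀ i, y' i ^ 2 ≤ y i ^ 2 := by
      intro i
      by_cases h : t ≤ |y i| <;> simp [hy', h] <;> positivity
    refine ⟨y', ⟨?_, ?_⟩, ?_⟩
    · refine le_trans (Real.sqrt_le_sqrt (Finset.sum_le_sum fun i _ => hsq i)) h2
    · -- cardinality bound
      set S : Finset (Fin p) := Finset.univ.filter (fun i => t ≤ |y i|) with hS
      have hsub : {i | y' i ≠ 0} ⊆ (S : Set (Fin p)) := by
        intro i hi
        simp only [Set.mem_setOf_eq, hy'] at hi
        by_cases h : t ≤ |y i|
        · simp [hS, h]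
        · simp [h] at hi
      have hnc : ({i | y' i ≠ 0}.ncard : ℝ) ≤ (S.card : ℝ) := by
        have := Set.ncard_le_ncard hsub S.finite_toSet
        rw [Set.ncard_coe_finset] at this
        exact_mod_cast this
      have hcard : t * S.card ≤ Real.sqrt k := by
        calc t * S.card = ∑ _i ∈ S, t := by rw [Finset.sum_const, nsmul_eq_mul, mul_comm]
          _ ≤ ∑ i ∈ S, |y i| := Finset.sum_le_sum fun i hi => by
              simpa [hS] using (Finset.mem_filter.mp hi).2
          _ ≤ ∑ i, |y i| := Finset.sum_le_sum_of_subset_of_nonneg (Finset.subset_univ S)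
              (fun i _ _ => abs_nonneg _)
          _ ≤ Real.sqrt k := h1
      refine hnc.trans ?_
      have : (S.card : ℝ) ≤ Real.sqrt k / t := by
        rw [le_div_iff₀ htpos]
        linarith [hcard]
      refine this.trans ?_
      rw [ht]
      rw [div_div_eq_mul_div, div_le_iff₀ (by norm_num : (0:ℝ) < 1)]
      have : Real.sqrt ((p:ℝ) * k) = Real.sqrt p * Real.sqrt k :=
        Real.sqrt_mul (le_of_lt hpR) _
      rw [this]
      ring_nf
      nlinarith [Real.sqrt_nonneg (k:ℝ), hsp]
    · -- distance bound
      have hk : Real.sqrt k ≤ Real.sqrt p / 40 := by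
        have h1600 : (k:ℝ) ≤ (p:ℝ) / 1600 := by
          have : (1600:ℝ) * k ≤ p := by exact_mod_cast Nat.le_of_lt hcase
          linarith
        calc Real.sqrt k ≤ Real.sqrt ((p:ℝ)/1600) := Real.sqrt_le_sqrt h1600
          _ = Real.sqrt p / 40 := by
              rw [show (p:ℝ)/1600 = (p:ℝ) * (1/40)^2 by ring,
                Real.sqrt_mul (Nat.cast_nonneg p), Real.sqrt_sq (by norm_num : (0:ℝ) ≤ 1/40)]
              ring
      have hbound : ∑ i, (y i - y' i) ^ 2 ≤ t * Real.sqrt k := by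
        have hterm : ∀ i, (y i - y' i) ^ 2 ≤ t * |y i| := by
          intro i
          by_cases h : t ≤ |y i|
          · simp [hy', h]
            positivity
          · push_neg at h
            simp only [hy', if_neg (not_le.mpr h), sub_zero]
            calc (y i)^2 = |y i| * |y i| := by
                  rw [abs_mul_abs_self, sq]
              _ ≤ t * |y i| := mul_le_mul_of_nonneg_right (le_of_lt h) (abs_nonneg _)
        calc ∑ i, (y i - y' i) ^ 2 ≤ ∑ i, t * |y i| := Finset.sum_le_sum fun i _ => hterm i
          _ = t * ∑ i, |y i| := by rw [Finset.mul_sum]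
          _ ≤ t * Real.sqrt k := mul_le_mul_of_nonneg_left h1 (le_of_lt htpos)
      have hfin : t * Real.sqrt k ≤ 1 / 1600 := by
        rw [ht]
        rw [div_mul_eq_mul_div, one_mul, div_le_div_iff₀ (by positivity) (by norm_num)]
        nlinarith [hk, hsp]
      calc Real.sqrt (∑ i, (y i - y' i) ^ 2) ≤ Real.sqrt (1/1600) :=
            Real.sqrt_le_sqrt (hbound.trans hfin)
        _ = 1/40 := by
            rw [show (1:ℝ)/1600 = (1/40)^2 by norm_num, Real.sqrt_sq (by norm_num)]
end

section
/- Let A be a p × p real symmetric matrix and let X be a p × p symmetric positive semidefinite matrix with tr(X) = 1. Let λ₁ be the largest eigenvalue of X and ẑ a corresponding unit-length eigenvector. Then ⟨A, X⟩ ≤ λ₁·(ẑᵀ·A·ẑ) + (1 − λ₁)·λ_max(A), where λ_max(A) is the largest eigenvalue of A. -/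
open MeasureTheory ProbabilityTheory Filter
open scoped ENNReal NNReal

/-! Since `ẑ` is a unit eigenvector of `X` for `λ₁`, the matrix `Y = X - λ₁ ẑẑᵀ` equals `PXP` with
`P = I - ẑẑᵀ`, so it is positive semidefinite, and `tr Y = 1 - λ₁`. Splitting
`⟨A, X⟩ = ⟨A, Y⟩ + λ₁ ẑᵀAẑ`, it remains to bound `⟨A, Y⟩ ≤ λ_max(A) tr Y`, i.e. to see that
`tr ((λ_max(A) I - A) Y) ≥ 0`: the trace of a product of two positive semidefinite matrices is
nonnegative. -/

namespace Matrix

variable {n : Type*} [Fintype n]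

lemma frobInner_eq_trace_transpose_mul {p : ℕ} (A B : Matrix (Fin p) (Fin p) ℝ) :
    frobInner A B = trace (Aᵀ * B) := by
  simp only [frobInner, trace, diag, mul_apply, transpose_apply]
  exact Finset.sum_comm

lemma setOf_mulVec_eq_smul_eq_spectrum {K : Type*} [Field K] [DecidableEq n]
    (A : Matrix n n K) : {μ | ∃ v, v ≠ 0 ∧ A *ᵥ v = μ • v} = spectrum K A := by
  ext μ
  rw [← spectrum_toLin', ← Module.End.hasEigenvalue_iff_mem_spectrum]
  constructor
  · rintro ⟨v, hv, hAv⟩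
    exact Module.End.hasEigenvalue_of_hasEigenvector
      ⟨Module.End.mem_eigenspace_iff.mpr (by simpa using hAv), hv⟩
  · intro hμ
    obtain ⟨v, hAv, hv⟩ := hμ.exists_hasEigenvector
    exact ⟨v, hv, by simpa using Module.End.mem_eigenspace_iff.mp hAv⟩

lemma le_lambdaMax_of_mem_spectrum {p : ℕ} {A : Matrix (Fin p) (Fin p) ℝ} {μ : ℝ}
    (hμ : μ ∈ spectrum ℝ A) : μ ≤ lambdaMax A := by
  rw [lambdaMax, setOf_mulVec_eq_smul_eq_spectrum]
  exact le_csSup A.finite_spectrum.bddAbove hμ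

open scoped MatrixOrder in
lemma posSemidef_lambdaMax_smul_one_sub {p : ℕ} {A : Matrix (Fin p) (Fin p) ℝ}
    (hA : A.IsHermitian) : (lambdaMax A • (1 : Matrix (Fin p) (Fin p) ℝ) - A).PosSemidef := by
  rw [← Algebra.algebraMap_eq_smul_one, ← le_iff]
  exact le_algebraMap_of_spectrum_le (fun _ => le_lambdaMax_of_mem_spectrum) hA

open scoped MatrixOrder ComplexOrder in
lemma PosSemidef.trace_mul_nonneg {𝕜 : Type*} [RCLike 𝕜] {M Y : Matrix n n 𝕜}
    (hM : M.PosSemidef) (hY : Y.PosSemidef) : 0 ≤ trace (M * Y) := by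
  classical
  obtain ⟨B, rfl⟩ := CStarAlgebra.nonneg_iff_eq_star_mul_self.mp hY.nonneg
  rw [star_eq_conjTranspose, ← Matrix.mul_assoc, trace_mul_comm, ← Matrix.mul_assoc]
  exact (hM.mul_mul_conjTranspose_same B).trace_nonneg

lemma trace_mul_le_lambdaMax_mul_trace {p : ℕ} {A Y : Matrix (Fin p) (Fin p) ℝ}
    (hA : A.IsHermitian) (hY : Y.PosSemidef) : trace (A * Y) ≤ lambdaMax A * trace Y := by
  have h := (posSemidef_lambdaMax_smul_one_sub hA).trace_mul_nonneg hY
  rwa [sub_mul, smul_mul, one_mul, trace_sub, trace_smul, smul_eq_mul, sub_nonneg] at h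

lemma posSemidef_sub_smul_vecMulVec [DecidableEq n] {X : Matrix n n ℝ} (hX : X.PosSemidef)
    {l : ℝ} {z : n → ℝ} (hz : z ⬝ᵥ z = 1) (hXz : X *ᵥ z = l • z) :
    (X - l • vecMulVec z z).PosSemidef := by
  set Z := vecMulVec z z
  have hXt : Xᵀ = X := (isHermitian_iff_isSymm.mp hX.isHermitian).eq
  have hXZ : X * Z = l • Z := by rw [mul_vecMulVec, hXz, smul_vecMulVec]
  have hZX : Z * X = l • Z := by
    rw [vecMulVec_mul, ← mulVec_transpose, hXt, hXz, vecMulVec_smul]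
  have hZZ : Z * Z = Z := by rw [vecMulVec_mul_vecMulVec, hz, one_smul]
  have hP : (1 - Z)ᴴ = 1 - Z := by
    rw [conjTranspose_sub, conjTranspose_one, conjTranspose_vecMulVec]; rfl
  have hPXP : X - l • Z = (1 - Z)ᴴ * X * (1 - Z) := by
    simp only [hP, sub_mul, mul_sub, one_mul, mul_one, hXZ, hZX, smul_mul, hZZ]
    abel
  rw [hPXP]
  exact hX.conjTranspose_mul_mul_same _

end Matrix

open Matrix in
/-- inequality (6.1): for a real symmetric `A` and a PSD trace-one `X` with
largest eigenvalue `λ₁` and corresponding unit eigenvector `ẑ`,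
`⟨A,X⟩ ≤ λ₁·ẑᵀAẑ + (1-λ₁)·λ_max(A)`. -/
theorem stmt_18 (p : ℕ) (A X : Matrix (Fin p) (Fin p) ℝ)
    (hA : A.IsSymm) (hX : X.PosSemidef) (hXtr : X.trace = 1)
    (zhat : Fin p → ℝ) (hzhat : (∑ i, zhat i ^ 2) = 1)
    (heig : X.mulVec zhat = lambdaMax X • zhat) :
    frobInner A X
      ≤ lambdaMax X * (∑ a, ∑ b, zhat a * A a b * zhat b)
        + (1 - lambdaMax X) * lambdaMax A := by
  have hz : zhat ⬝ᵥ zhat = 1 := by simpa [dotProduct, sq] using hzhat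
  have hAH : A.IsHermitian := isHermitian_iff_isSymm.mpr hA
  set l := lambdaMax X
  set Z := vecMulVec zhat zhat
  have hY : (X - l • Z).PosSemidef := posSemidef_sub_smul_vecMulVec hX hz heig
  have hYtr : trace (X - l • Z) = 1 - l := by
    rw [trace_sub, trace_smul, trace_vecMulVec, hz, hXtr, smul_eq_mul, mul_one]
  have hquad : trace (A * Z) = ∑ a, ∑ b, zhat a * A a b * zhat b := by
    rw [mul_vecMulVec, trace_vecMulVec, dotProduct_comm]
    simp only [dotProduct, mulVec, Finset.mul_sum]
    exact Finset.sum_congr rfl fun _ _ => Finset.sum_congr rfl fun _ _ => by ring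
  have hsplit : frobInner A X = trace (A * (X - l • Z)) + l * trace (A * Z) := by
    rw [frobInner_eq_trace_transpose_mul, hA.eq, mul_sub, trace_sub, Matrix.mul_smul, trace_smul,
      smul_eq_mul, sub_add_cancel]
  have hbound := trace_mul_le_lambdaMax_mul_trace hAH hY
  rw [hYtr] at hbound
  rw [hsplit, ← hquad]
  linarith
end
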